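/- arXiv:1003.5644 — 4 statements merged into one kernel-verified Lean document; each statement's English description precedes it below -/
import Mathlib

section
/- An almost Hermitian manifold (M, g, J) is Hermitian (J integrable) if and only if ∇_{JX} J = J ∇_X J for all X ∈ TM, and (1,2)-symplectic if and only if ∇_{JX} J = −J ∇_X J for all X ∈ TM, where ∇ is the Levi-Civita connection. -/
/-- The element `i` of a `ℂ`-algebra of (complex-valued) functions. -/
noncomputable def cI (F : Type*) [CommRing F] [Algebra ℂ F] : F :=
  algebraMap ℂ F Complex.I

/-- An almost Hermitian manifold is Hermitian (`J` integrable, i.e. the Nijenhuis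
tensor vanishes) if and only if `∇_{JX} J = J ∘ ∇_X J` for all (real) vector fields
`X`, and `(1,2)`-symplectic (`∇_{T⁰¹M} T¹⁰M ⊆ T¹⁰M`) if and only if
`∇_{JX} J = -J ∘ ∇_X J` for all `X`, where `∇` is the Levi-Civita connection and
`(∇_X J) Y = ∇_X (JY) - J ∇_X Y`.  Abstract (section-level) formulation as in the
companion statements: `F` is the ring of complexified functions, `T` the complexified
vector fields with conjugation `star` (real fields are the star-fixed ones), `g` the
complex-bilinear nondegenerate metric, `br` the bracket, `nab` the torsion-free
metric-compatible connection. -/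
theorem hermitian_and_one_two_symplectic_via_nabla_J
    (F T : Type*) [CommRing F] [Algebra ℂ F] [StarRing F]
    [AddCommGroup T] [Module F T] [StarAddMonoid T] [StarModule F T]
    (hstarF : ∀ c : ℂ, star (algebraMap ℂ F c) = algebraMap ℂ F (starRingEnd ℂ c))
    (g : T →ₗ[F] T →ₗ[F] F)
    (hgsymm : ∀ x y, g x y = g y x)
    (hnondeg : ∀ x, (∀ y, g x y = 0) → x = 0)
    (J : T →ₗ[F] T) (hJ2 : ∀ x, J (J x) = -x)
    (hgJ : ∀ x y, g (J x) (J y) = g x y)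
    (hJstar : ∀ x, J (star x) = star (J x))
    (D : T → F → F) (hD0 : ∀ x, D x 0 = 0)
    (nab : T → T → T)
    (hadd1 : ∀ x y z, nab (x + y) z = nab x z + nab y z)
    (hsm1 : ∀ (f : F) (x z : T), nab (f • x) z = f • nab x z)
    (hadd2 : ∀ x y z, nab x (y + z) = nab x y + nab x z)
    (hsm2 : ∀ (x : T) (c : ℂ) (y : T),
      nab x (algebraMap ℂ F c • y) = algebraMap ℂ F c • nab x y)
    (hstarnab : ∀ x y, nab (star x) (star y) = star (nab x y))
    (hcompat : ∀ x y z, D x (g y z) = g (nab x y) z + g y (nab x z))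
    (br : T → T → T)
    (hbradd1 : ∀ x y z, br (x + y) z = br x z + br y z)
    (hbradd2 : ∀ x y z, br x (y + z) = br x y + br x z)
    (hbrsm1 : ∀ (c : ℂ) (x y : T),
      br (algebraMap ℂ F c • x) y = algebraMap ℂ F c • br x y)
    (hbrsm2 : ∀ (c : ℂ) (x y : T),
      br x (algebraMap ℂ F c • y) = algebraMap ℂ F c • br x y)
    (hbrstar : ∀ x y, br (star x) (star y) = star (br x y))
    (htors : ∀ x y, nab x y - nab y x = br x y) :
    ((∀ X Y : T, star X = X → star Y = Y →
        br X Y + J (br (J X) Y) + J (br X (J Y)) - br (J X) (J Y) = 0) ↔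
      (∀ X Y : T, star X = X → star Y = Y →
        nab (J X) (J Y) - J (nab (J X) Y) = J (nab X (J Y)) + nab X Y)) ∧
    ((∀ Z W : T, J Z = -(cI F) • Z → J W = cI F • W →
        J (nab Z W) = cI F • nab Z W) ↔
      (∀ X Y : T, star X = X → star Y = Y →
        nab (J X) (J Y) - J (nab (J X) Y) = -(J (nab X (J Y)) + nab X Y))) := by
  
  simp only [cI]
  -- basic linearity facts for `nab` in the second argument
  have hnneg : ∀ x y : T, nab x (-y) = -(nab x y) := by
    intro x y
    calc nab x (-y) = nab x (algebraMap ℂ F (-1 : ℂ) • y) := by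
          rw [map_neg, map_one, neg_smul, one_smul]
      _ = algebraMap ℂ F (-1 : ℂ) • nab x y := hsm2 x (-1) y
      _ = -(nab x y) := by rw [map_neg, map_one, neg_smul, one_smul]
  have hnsub : ∀ x y z : T, nab x (y - z) = nab x y - nab x z := by
    intro x y z
    rw [sub_eq_add_neg, hadd2, hnneg, sub_eq_add_neg]
  have hJJn : ∀ x y : T, nab x (J (J y)) = -(nab x y) := by
    intro x y; rw [hJ2]; exact hnneg x y
  -- metric facts
  have hgswap : ∀ y z : T, g (J y) z = -(g y (J z)) := by
    intro y z
    have h1 := hgJ y (J z)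
    rw [hJ2, map_neg] at h1
    linear_combination -h1
  have hskew : ∀ x y z : T, g (nab x (J y)) z - g (J (nab x y)) z
      = -(g y (nab x (J z))) + g y (J (nab x z)) := by
    intro x y z
    have e1 : g (J y) z = g y (-(J z)) := by rw [map_neg]; exact hgswap y z
    have d1 := hcompat x (J y) z
    have d2 := hcompat x y (-(J z))
    rw [← e1] at d2
    rw [hnneg] at d2
    simp only [map_neg] at d2
    have e := d1.symm.trans d2
    have hs1 := hgswap (nab x y) z
    have hs2 := hgswap y (nab x z)
    linear_combination e - hs1 - hs2
  have hAskew : ∀ x y z : T,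
      g (nab (J x) (J y) - J (nab (J x) y) - J (nab x (J y)) - nab x y) z
      = -(g (nab (J x) (J z) - J (nab (J x) z) - J (nab x (J z)) - nab x z) y) := by
    intro x y z
    simp only [map_sub, LinearMap.sub_apply]
    have h1 := hskew (J x) y z
    have h2 := hskew x y (J z)
    rw [hJJn x z] at h2
    simp only [map_neg, neg_neg] at h2
    have s1 := hgswap (nab x (J y)) z
    have s2 := hgJ (nab x y) z
    have t1 := hgsymm y (nab (J x) (J z))
    have t2 := hgsymm y (J (nab (J x) z))
    have t3 := hgsymm y (J (nab x (J z)))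
    have t4 := hgsymm y (nab x z)
    linear_combination h1 + h2 - s1 + s2 - t1 + t2 + t3 + t4
  -- scalar helpers
  have hhalf : ∀ v : T, algebraMap ℂ F (2⁻¹ : ℂ) • v + algebraMap ℂ F (2⁻¹ : ℂ) • v = v := by
    intro v
    rw [← add_smul, ← map_add, show (2⁻¹ + 2⁻¹ : ℂ) = 1 from by norm_num, map_one, one_smul]
  have hmerge : ∀ v : T,
      v - algebraMap ℂ F (2⁻¹ : ℂ) • v - algebraMap ℂ F (2⁻¹ : ℂ) • v = 0 := by
    intro v; rw [sub_sub, hhalf, sub_self]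
  have sA : ∀ v : T, algebraMap ℂ F Complex.I • algebraMap ℂ F (2⁻¹ : ℂ) •
      algebraMap ℂ F Complex.I • v = -(algebraMap ℂ F (2⁻¹ : ℂ) • v) := by
    intro v
    rw [smul_smul, smul_smul, ← map_mul, ← map_mul,
      show Complex.I * (2⁻¹ : ℂ) * Complex.I = -(2⁻¹ : ℂ) from by
        linear_combination (2⁻¹ : ℂ) * Complex.I_mul_I,
      map_neg, neg_smul]
  have sB : ∀ v : T, algebraMap ℂ F Complex.I • algebraMap ℂ F (2⁻¹ : ℂ) •
      -(algebraMap ℂ F Complex.I • v) = algebraMap ℂ F (2⁻¹ : ℂ) • v := by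
    intro v
    rw [smul_neg, smul_neg, sA, neg_neg]
  have sI3 : ∀ v : T, algebraMap ℂ F Complex.I • algebraMap ℂ F (-(Complex.I/2)) • v
      = algebraMap ℂ F (2⁻¹ : ℂ) • v := by
    intro v
    rw [smul_smul, ← map_mul,
      show Complex.I * -(Complex.I/2) = (2⁻¹ : ℂ) from by
        linear_combination (-(1:ℂ)/2) * Complex.I_mul_I]
  -- decomposition of an arbitrary vector into real and imaginary real parts
  have hdecomp : ∀ w : T, ∃ a b : T, star a = a ∧ star b = b ∧
      w = a + algebraMap ℂ F Complex.I • b := by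
    intro w
    refine ⟨algebraMap ℂ F (2⁻¹ : ℂ) • (w + star w),
      algebraMap ℂ F (-(Complex.I/2)) • (w - star w), ?_, ?_, ?_⟩
    · rw [star_smul, hstarF, star_add, star_star,
        show (starRingEnd ℂ) (2⁻¹ : ℂ) = (2⁻¹ : ℂ) from by rw [map_inv₀, map_ofNat],
        add_comm (star w) w]
    · rw [star_smul, hstarF, star_sub, star_star,
        show (starRingEnd ℂ) (-(Complex.I/2)) = Complex.I/2 from by
          rw [map_neg, map_div₀, Complex.conj_I, map_ofNat]; ring,
        show star w - w = -(w - star w) from (neg_sub w (star w)).symm,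
        smul_neg, ← neg_smul, ← map_neg]
    · apply eq_of_sub_eq_zero
      rw [sI3, smul_add, smul_sub]
      refine Eq.trans ?_ (hmerge w)
      abel
  -- expansion of nab on (0,1)/(1,0) combinations
  have hZWexp : ∀ X Y : T,
      nab (X + algebraMap ℂ F Complex.I • J X) (Y - algebraMap ℂ F Complex.I • J Y)
      = (nab X Y + nab (J X) (J Y))
        + algebraMap ℂ F Complex.I • (nab (J X) Y - nab X (J Y)) := by
    intro X Y
    rw [hadd1, hsm1, hnsub, hnsub, hsm2, hsm2]
    simp only [smul_sub, smul_smul, ← map_mul, Complex.I_mul_I, map_neg, map_one,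
      neg_smul, one_smul]
    abel
  have hZeig : ∀ X : T, J (X + algebraMap ℂ F Complex.I • J X)
      = -(algebraMap ℂ F Complex.I) • (X + algebraMap ℂ F Complex.I • J X) := by
    intro X
    rw [map_add, map_smul, hJ2, smul_neg, neg_smul, smul_add, smul_smul, ← map_mul,
      Complex.I_mul_I, map_neg, map_one, neg_smul, one_smul]
    abel
  have hWeig : ∀ Y : T, J (Y - algebraMap ℂ F Complex.I • J Y)
      = algebraMap ℂ F Complex.I • (Y - algebraMap ℂ F Complex.I • J Y) := by
    intro Y
    rw [map_sub, map_smul, hJ2, smul_neg, smul_sub, smul_smul, ← map_mul,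
      Complex.I_mul_I, map_neg, map_one, neg_smul, one_smul]
    abel
  constructor
  · -- Part 1 : integrability
    constructor
    · intro hN X Y hX hY
      have hAsymm : ∀ u v : T, star u = u → star v = v →
          nab (J u) (J v) - J (nab (J u) v) - J (nab u (J v)) - nab u v
          = nab (J v) (J u) - J (nab (J v) u) - J (nab v (J u)) - nab v u := by
        intro u v hu hv
        apply eq_of_sub_eq_zero
        calc nab (J u) (J v) - J (nab (J u) v) - J (nab u (J v)) - nab u v
              - (nab (J v) (J u) - J (nab (J v) u) - J (nab v (J u)) - nab v u)
            = -(br u v + J (br (J u) v) + J (br u (J v)) - br (J u) (J v)) := by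
              simp only [← htors, map_sub]; abel
          _ = 0 := by rw [hN u v hu hv, neg_zero]
      have hT0 : ∀ u v w : T, star u = u → star v = v → star w = w →
          g (nab (J u) (J v) - J (nab (J u) v) - J (nab u (J v)) - nab u v) w = 0 := by
        intro u v w hu hv hw
        have hchain : g (nab (J u) (J v) - J (nab (J u) v) - J (nab u (J v)) - nab u v) w
            = -(g (nab (J u) (J v) - J (nab (J u) v) - J (nab u (J v)) - nab u v) w) := by
          calc g (nab (J u) (J v) - J (nab (J u) v) - J (nab u (J v)) - nab u v) w
              = g (nab (J v) (J u) - J (nab (J v) u) - J (nab v (J u)) - nab v u) w := by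
                rw [hAsymm u v hu hv]
            _ = -(g (nab (J v) (J w) - J (nab (J v) w) - J (nab v (J w)) - nab v w) u) :=
                hAskew v u w
            _ = -(g (nab (J w) (J v) - J (nab (J w) v) - J (nab w (J v)) - nab w v) u) := by
                rw [hAsymm v w hv hw]
            _ = g (nab (J w) (J u) - J (nab (J w) u) - J (nab w (J u)) - nab w u) v := by
                rw [hAskew w v u, neg_neg]
            _ = g (nab (J u) (J w) - J (nab (J u) w) - J (nab u (J w)) - nab u w) v := by
                rw [hAsymm w u hw hu]
            _ = -(g (nab (J u) (J v) - J (nab (J u) v) - J (nab u (J v)) - nab u v) w) :=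
                hAskew u w v
        have h2 : g (nab (J u) (J v) - J (nab (J u) v) - J (nab u (J v)) - nab u v) w
            + g (nab (J u) (J v) - J (nab (J u) v) - J (nab u (J v)) - nab u v) w = 0 := by
          linear_combination hchain
        have h3 : algebraMap ℂ F (2⁻¹ : ℂ) *
            (g (nab (J u) (J v) - J (nab (J u) v) - J (nab u (J v)) - nab u v) w
              + g (nab (J u) (J v) - J (nab (J u) v) - J (nab u (J v)) - nab u v) w) = 0 := by
          rw [h2, mul_zero]
        have hhF : algebraMap ℂ F (2⁻¹ : ℂ) + algebraMap ℂ F (2⁻¹ : ℂ) = 1 := by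
          rw [← map_add, show (2⁻¹ + 2⁻¹ : ℂ) = 1 from by norm_num, map_one]
        linear_combination h3
          - (g (nab (J u) (J v) - J (nab (J u) v) - J (nab u (J v)) - nab u v) w) * hhF
      have hA0 : nab (J X) (J Y) - J (nab (J X) Y) - J (nab X (J Y)) - nab X Y = 0 := by
        apply hnondeg
        intro w
        obtain ⟨a, b, ha, hb, hw⟩ := hdecomp w
        rw [hw, map_add, map_smul, smul_eq_mul, hT0 X Y a hX hY ha, hT0 X Y b hX hY hb,
          mul_zero, add_zero]
      apply eq_of_sub_eq_zero
      refine Eq.trans ?_ hA0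
      abel
    · intro hE X Y hX hY
      have hA : ∀ u v : T, star u = u → star v = v →
          nab (J u) (J v) - J (nab (J u) v) - J (nab u (J v)) - nab u v = 0 := by
        intro u v hu hv
        have h := hE u v hu hv
        calc nab (J u) (J v) - J (nab (J u) v) - J (nab u (J v)) - nab u v
            = (nab (J u) (J v) - J (nab (J u) v)) - (J (nab u (J v)) + nab u v) := by abel
          _ = 0 := by rw [h, sub_self]
      calc br X Y + J (br (J X) Y) + J (br X (J Y)) - br (J X) (J Y)
          = (nab (J Y) (J X) - J (nab (J Y) X) - J (nab Y (J X)) - nab Y X)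
            - (nab (J X) (J Y) - J (nab (J X) Y) - J (nab X (J Y)) - nab X Y) := by
            simp only [← htors, map_sub]; abel
        _ = 0 := by rw [hA Y X hY hX, hA X Y hX hY, sub_zero]
  · -- Part 2 : (1,2)-symplectic
    constructor
    · intro hS X Y hX hY
      have key : J (nab (X + algebraMap ℂ F Complex.I • J X)
            (Y - algebraMap ℂ F Complex.I • J Y))
          = algebraMap ℂ F Complex.I • nab (X + algebraMap ℂ F Complex.I • J X)
            (Y - algebraMap ℂ F Complex.I • J Y) :=
        hS _ _ (hZeig X) (hWeig Y)
      rw [hZWexp X Y] at key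
      have E1 : J ((nab X Y + nab (J X) (J Y)) - J (nab (J X) Y - nab X (J Y)))
          = algebraMap ℂ F Complex.I •
            ((nab X Y + nab (J X) (J Y)) - J (nab (J X) Y - nab X (J Y))) := by
        apply eq_of_sub_eq_zero
        have hk := sub_eq_zero.mpr key
        calc J ((nab X Y + nab (J X) (J Y)) - J (nab (J X) Y - nab X (J Y)))
              - algebraMap ℂ F Complex.I •
                ((nab X Y + nab (J X) (J Y)) - J (nab (J X) Y - nab X (J Y)))
            = J ((nab X Y + nab (J X) (J Y))
                + algebraMap ℂ F Complex.I • (nab (J X) Y - nab X (J Y)))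
              - algebraMap ℂ F Complex.I • ((nab X Y + nab (J X) (J Y))
                + algebraMap ℂ F Complex.I • (nab (J X) Y - nab X (J Y))) := by
              simp only [map_add, map_sub, map_smul, smul_add, smul_sub, smul_smul,
                ← map_mul, Complex.I_mul_I, map_neg, map_one, neg_smul, one_smul, hJ2]
              abel
          _ = 0 := hk
      have hstA : star ((nab X Y + nab (J X) (J Y)) - J (nab (J X) Y - nab X (J Y)))
          = (nab X Y + nab (J X) (J Y)) - J (nab (J X) Y - nab X (J Y)) := by
        simp only [star_sub, star_add, ← hJstar, ← hstarnab, hX, hY]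
      have E2 : J ((nab X Y + nab (J X) (J Y)) - J (nab (J X) Y - nab X (J Y)))
          = -(algebraMap ℂ F Complex.I •
            ((nab X Y + nab (J X) (J Y)) - J (nab (J X) Y - nab X (J Y)))) := by
        have h := congrArg star E1
        rw [← hJstar, hstA, star_smul, hstarF, hstA, Complex.conj_I, map_neg, neg_smul] at h
        exact h
      have h0 : algebraMap ℂ F Complex.I •
            ((nab X Y + nab (J X) (J Y)) - J (nab (J X) Y - nab X (J Y)))
          + algebraMap ℂ F Complex.I •
            ((nab X Y + nab (J X) (J Y)) - J (nab (J X) Y - nab X (J Y))) = 0 := by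
        have h := E1.symm.trans E2
        rw [eq_neg_iff_add_eq_zero] at h
        exact h
      have hA'0 : (nab X Y + nab (J X) (J Y)) - J (nab (J X) Y - nab X (J Y)) = 0 := by
        have h3 := congrArg (fun v => algebraMap ℂ F (-(Complex.I/2)) • v) h0
        simp only [smul_add, smul_smul, ← map_mul, smul_zero] at h3
        rw [show -(Complex.I/2) * Complex.I = (2⁻¹ : ℂ) from by
            linear_combination (-(1:ℂ)/2) * Complex.I_mul_I] at h3
        rwa [← add_smul, ← map_add, show (2⁻¹ + 2⁻¹ : ℂ) = 1 from by norm_num, map_one,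
          one_smul] at h3
      apply eq_of_sub_eq_zero
      calc nab (J X) (J Y) - J (nab (J X) Y) - -(J (nab X (J Y)) + nab X Y)
          = (nab X Y + nab (J X) (J Y)) - J (nab (J X) Y - nab X (J Y)) := by
            simp only [map_sub]; abel
        _ = 0 := hA'0
    · intro hE Z W hZ hW
      rw [neg_smul] at hZ
      set X := algebraMap ℂ F (2⁻¹ : ℂ) • (Z + star Z) with hXdef
      set Y := algebraMap ℂ F (2⁻¹ : ℂ) • (W + star W) with hYdef
      have hX : star X = X := by
        rw [hXdef, star_smul, hstarF, star_add, star_star,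
          show (starRingEnd ℂ) (2⁻¹ : ℂ) = (2⁻¹ : ℂ) from by rw [map_inv₀, map_ofNat],
          add_comm (star Z) Z]
      have hY : star Y = Y := by
        rw [hYdef, star_smul, hstarF, star_add, star_star,
          show (starRingEnd ℂ) (2⁻¹ : ℂ) = (2⁻¹ : ℂ) from by rw [map_inv₀, map_ofNat],
          add_comm (star W) W]
      have hZ' : J (star Z) = algebraMap ℂ F Complex.I • star Z := by
        have h := congrArg star hZ
        rw [← hJstar, star_neg, star_smul, hstarF, Complex.conj_I, map_neg, neg_smul,
          neg_neg] at h
        exact h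
      have hW' : J (star W) = -(algebraMap ℂ F Complex.I • star W) := by
        have h := congrArg star hW
        rw [← hJstar, star_smul, hstarF, Complex.conj_I, map_neg, neg_smul] at h
        exact h
      have hZdec : Z = X + algebraMap ℂ F Complex.I • J X := by
        apply eq_of_sub_eq_zero
        rw [hXdef, map_smul, map_add, hZ, hZ']
        simp only [smul_add, smul_neg, sA, sB]
        refine Eq.trans ?_ (hmerge Z)
        abel
      have hWdec : W = Y - algebraMap ℂ F Complex.I • J Y := by
        apply eq_of_sub_eq_zero
        rw [hYdef, map_smul, map_add, hW, hW']
        simp only [smul_add, smul_neg, sA, sB]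
        refine Eq.trans ?_ (hmerge W)
        abel
      have hA'0 : (nab X Y + nab (J X) (J Y)) - J (nab (J X) Y - nab X (J Y)) = 0 := by
        have h := hE X Y hX hY
        calc (nab X Y + nab (J X) (J Y)) - J (nab (J X) Y - nab X (J Y))
            = (nab (J X) (J Y) - J (nab (J X) Y)) + (J (nab X (J Y)) + nab X Y) := by
              simp only [map_sub]; abel
          _ = 0 := by rw [h, neg_add_cancel]
      rw [hZdec, hWdec, hZWexp X Y]
      apply eq_of_sub_eq_zero
      calc J ((nab X Y + nab (J X) (J Y))
              + algebraMap ℂ F Complex.I • (nab (J X) Y - nab X (J Y)))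
            - algebraMap ℂ F Complex.I • ((nab X Y + nab (J X) (J Y))
              + algebraMap ℂ F Complex.I • (nab (J X) Y - nab X (J Y)))
          = J ((nab X Y + nab (J X) (J Y)) - J (nab (J X) Y - nab X (J Y)))
            - algebraMap ℂ F Complex.I •
              ((nab X Y + nab (J X) (J Y)) - J (nab (J X) Y - nab X (J Y))) := by
            simp only [map_add, map_sub, map_smul, smul_add, smul_sub, smul_smul,
              ← map_mul, Complex.I_mul_I, map_neg, map_one, neg_smul, one_smul, hJ2]
            abel
        _ = 0 := by rw [hA'0, map_zero, smul_zero, sub_zero]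
end

section
/- Let φ : (M, J) → (N, h) be a pluriharmonic and pluriconformal map from a complex manifold to a Riemannian manifold, with φ an immersion. Then the pull-back metric g = φ*h on M is a Kähler metric for the complex structure J; in particular the Kähler form ω = g(J·, ·) is closed. -/
/-- The Kähler form evaluated on two complexified vector fields. -/
def omg {F V S : Type*} [CommRing F] [AddCommGroup V] [Module F V] [AddCommGroup S]
    [Module F S] (h : S →ₗ[F] S →ₗ[F] F) (dphi : V →ₗ[F] S) (JM : V →ₗ[F] V) (x y : V) : F :=
  h (dphi (JM x)) (dphi y)

@[simp] theorem omg_apply {F V S : Type*} [CommRing F] [AddCommGroup V] [Module F V]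
    [AddCommGroup S] [Module F S] (h : S →ₗ[F] S →ₗ[F] F) (dphi : V →ₗ[F] S)
    (JM : V →ₗ[F] V) (x y : V) : omg h dphi JM x y = h (dphi (JM x)) (dphi y) := rfl

/-- The exterior differential of the Kähler form, evaluated on three fields. -/
def Tf {F V S : Type*} [CommRing F] [AddCommGroup V] [Module F V] [AddCommGroup S]
    [Module F S] (h : S →ₗ[F] S →ₗ[F] F) (dphi : V →ₗ[F] S) (JM : V →ₗ[F] V)
    (D : V → F → F) (br : V → V → V) (x y z : V) : F :=
  D x (omg h dphi JM y z) - D y (omg h dphi JM x z) + D z (omg h dphi JM x y)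
    - omg h dphi JM (br x y) z + omg h dphi JM (br x z) y - omg h dphi JM (br y z) x

@[simp] theorem Tf_apply {F V S : Type*} [CommRing F] [AddCommGroup V] [Module F V]
    [AddCommGroup S] [Module F S] (h : S →ₗ[F] S →ₗ[F] F) (dphi : V →ₗ[F] S)
    (JM : V →ₗ[F] V) (D : V → F → F) (br : V → V → V) (x y z : V) :
    Tf h dphi JM D br x y z =
      D x (omg h dphi JM y z) - D y (omg h dphi JM x z) + D z (omg h dphi JM x y)
      - omg h dphi JM (br x y) z + omg h dphi JM (br x z) y
      - omg h dphi JM (br y z) x := rfl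

/-- Basis vector fields of type `(1,0)` and `(0,1)`. -/
def Wb {m : ℕ} {V : Type*} [Star V] (Z : Fin m → V) : Bool → Fin m → V
  | false, k => Z k
  | true, k => star (Z k)

/-- The `J`-eigenvalue of a basis vector field. -/
noncomputable def eB (F : Type*) [CommRing F] [Algebra ℂ F] : Bool → F
  | false => cI F
  | true => -(cI F)

/-- Let `φ : (M,J) → (N,h)` be a pluriharmonic and pluriconformal (immersive) map from
a complex manifold to a Riemannian manifold.  Then the pull-back metric `g = φ*h` on
`M` is Kähler for `J`: it is compatible with `J` and its Kähler form
`ω(X,Y) = g(JX,Y)` is closed.  Abstract (section-level) formulation: `F` is the ring of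
complexified functions on `M`, `V` the complexified vector fields on `M` (with
conjugation `star`, bracket `br`, derivation action `D` and almost complex structure
`JM`), `S` the sections of `φ⁻¹T^ℂN` with complex-bilinear metric `h` and pull-back
connection `nab` (metric-compatible, with `∇_X dφ(Y) - ∇_Y dφ(X) = dφ[X,Y]`).
The complex structure of `M` is encoded by a spanning family of commuting holomorphic
coordinate fields `Z k` (of type `(1,0)`, commuting also with their conjugates);
pluriconformality says `dφ(T¹⁰M)` is `h`-isotropic, and pluriharmonicity says
`∇_{∂z_k} dφ(∂z̄_l) = 0`.  Conclusion: `g(JX, JY) = g(X, Y)` and `dω = 0`, where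
`g(X,Y) = h(dφ X, dφ Y)`, `ω(X,Y) = g(JM X, Y)` and `dω` is given by the standard
formula for the exterior derivative of a 2-form. -/
theorem pullback_metric_is_Kaehler
    (F V S : Type*) [CommRing F] [Algebra ℂ F] [StarRing F]
    [AddCommGroup V] [Module F V] [StarAddMonoid V] [StarModule F V]
    [AddCommGroup S] [Module F S] [StarAddMonoid S] [StarModule F S]
    (hstarF : ∀ c : ℂ, star (algebraMap ℂ F c) = algebraMap ℂ F (starRingEnd ℂ c))
    (JM : V →ₗ[F] V) (hJM2 : ∀ v, JM (JM v) = -v)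
    (hJMstar : ∀ v, JM (star v) = star (JM v))
    (dphi : V →ₗ[F] S)
    (hdphistar : ∀ v, dphi (star v) = star (dphi v))
    (h : S →ₗ[F] S →ₗ[F] F)
    (hhsymm : ∀ u v, h u v = h v u)
    (hhstar : ∀ u v, h (star u) (star v) = star (h u v))
    (D : V → F → F)
    (hDadd1 : ∀ (x y : V) (a : F), D (x + y) a = D x a + D y a)
    (hDsm1 : ∀ (f : F) (x : V) (a : F), D (f • x) a = f * D x a)
    (hDadd2 : ∀ (x : V) (a b : F), D x (a + b) = D x a + D x b)
    (hDleib : ∀ (x : V) (a b : F), D x (a * b) = a * D x b + D x a * b)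
    (br : V → V → V)
    (hbranti : ∀ x y, br x y = -br y x)
    (hbradd2 : ∀ x y z, br x (y + z) = br x y + br x z)
    (hbrleib : ∀ (x : V) (f : F) (y : V), br x (f • y) = D x f • y + f • br x y)
    (hbrstar : ∀ x y, br (star x) (star y) = star (br x y))
    (nab : V → S → S)
    (hadd1 : ∀ x y s, nab (x + y) s = nab x s + nab y s)
    (hsm1 : ∀ (f : F) (x : V) (s : S), nab (f • x) s = f • nab x s)
    (hadd2 : ∀ x s t, nab x (s + t) = nab x s + nab x t)
    (hleib : ∀ (x : V) (f : F) (s : S), nab x (f • s) = D x f • s + f • nab x s)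
    (hnabstar : ∀ x s, nab (star x) (star s) = star (nab x s))
    (hcompat : ∀ (x : V) (u v : S), D x (h u v) = h (nab x u) v + h u (nab x v))
    (htors : ∀ x y : V, nab x (dphi y) - nab y (dphi x) = dphi (br x y))
    -- pluriconformality: `dφ(T¹⁰M)` is isotropic for `h`
    (hpc : ∀ v w : V, JM v = cI F • v → JM w = cI F • w → h (dphi v) (dphi w) = 0)
    -- holomorphic coordinate fields spanning the complexified tangent bundle
    (m : ℕ) (Z : Fin m → V)
    (hZeig : ∀ k, JM (Z k) = cI F • Z k)
    (hZcomm : ∀ k l, br (Z k) (Z l) = 0)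
    (hZcommbar : ∀ k l, br (Z k) (star (Z l)) = 0)
    (hZspan : Submodule.span F
      (Set.range Z ∪ Set.range fun k => star (Z k)) = ⊤)
    -- pluriharmonicity in holomorphic coordinates
    (hph : ∀ k l, nab (Z k) (dphi (star (Z l))) = 0) :
    (∀ x y : V, h (dphi (JM x)) (dphi (JM y)) = h (dphi x) (dphi y)) ∧
    (∀ x y z : V,
      D x (h (dphi (JM y)) (dphi z)) - D y (h (dphi (JM x)) (dphi z))
        + D z (h (dphi (JM x)) (dphi y))
        - h (dphi (JM (br x y))) (dphi z) + h (dphi (JM (br x z))) (dphi y)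
        - h (dphi (JM (br y z))) (dphi x) = 0) := by
  -- membership and basis facts
  have mem_top : ∀ v : V,
      v ∈ Submodule.span F (Set.range Z ∪ Set.range fun k => star (Z k)) := by
    intro v; rw [hZspan]; exact Submodule.mem_top
  have basis_form : ∀ v ∈ (Set.range Z ∪ Set.range fun k => star (Z k)),
      ∃ b k, v = Wb Z b k := by
    intro v hv
    rcases hv with ⟨k, rfl⟩ | ⟨k, rfl⟩
    · exact ⟨false, k, rfl⟩
    · exact ⟨true, k, rfl⟩
  -- algebraic preliminaries
  have half : ∀ a : F, a + a = 0 → a = 0 := by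
    intro a ha
    have hone : (algebraMap ℂ F (1/2) + algebraMap ℂ F (1/2)) = 1 := by
      rw [← map_add]; norm_num
    have h2 : algebraMap ℂ F (1/2) * (a + a) = a := by
      calc algebraMap ℂ F (1/2) * (a + a)
          = (algebraMap ℂ F (1/2) + algebraMap ℂ F (1/2)) * a := by ring
        _ = a := by rw [hone, one_mul]
    rw [ha, mul_zero] at h2; exact h2.symm
  have hD0 : ∀ x : V, D x 0 = 0 := by
    intro x
    have h1 := hDadd2 x 0 0
    rw [add_zero] at h1
    linear_combination -h1
  have hD1 : ∀ x : V, D x (1 : F) = 0 := by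
    intro x
    have h1 := hDleib x 1 1
    conv at h1 => lhs; rw [one_mul]
    linear_combination -h1
  have hDneg : ∀ (x : V) (a : F), D x (-a) = -D x a := by
    intro x a
    have h1 := hDadd2 x a (-a)
    rw [add_neg_cancel, hD0] at h1
    linear_combination -h1
  have hI2 : cI F * cI F = -1 := by
    rw [cI, ← map_mul, Complex.I_mul_I, map_neg, map_one]
  have starI : star (cI F) = -(cI F) := by
    rw [cI, hstarF, Complex.conj_I, map_neg]
  have hDI : ∀ x : V, D x (cI F) = 0 := by
    intro x
    have h1 := hDleib x (cI F) (cI F)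
    rw [hI2] at h1
    have h2 : D x (-(1:F)) = 0 := by rw [hDneg, hD1, neg_zero]
    rw [h2] at h1
    have h4 : cI F * D x (cI F) = 0 := half _ (by linear_combination -h1)
    have h5 : D x (cI F) = -(cI F * (cI F * D x (cI F))) := by
      rw [← mul_assoc, hI2]; ring
    rw [h4, mul_zero, neg_zero] at h5
    exact h5
  have hDe : ∀ (x : V) (b : Bool), D x (eB F b) = 0 := by
    intro x b
    cases b
    · exact hDI x
    · show D x (-(cI F)) = 0
      rw [hDneg, hDI, neg_zero]
  -- basis geometric facts
  have eigW : ∀ b k, JM (Wb Z b k) = eB F b • Wb Z b k := by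
    intro b k
    cases b
    · exact hZeig k
    · show JM (star (Z k)) = -(cI F) • star (Z k)
      rw [hJMstar, hZeig, star_smul, starI]
  have brW : ∀ (b b' : Bool) (k l : Fin m), br (Wb Z b k) (Wb Z b' l) = 0 := by
    intro b b' k l
    cases b <;> cases b'
    · exact hZcomm k l
    · exact hZcommbar k l
    · show br (star (Z k)) (Z l) = 0
      rw [hbranti, hZcommbar l k, neg_zero]
    · show br (star (Z k)) (star (Z l)) = 0
      rw [hbrstar, hZcomm, star_zero]
  have iso0 : ∀ k l, h (dphi (Z k)) (dphi (Z l)) = 0 := fun k l =>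
    hpc (Z k) (Z l) (hZeig k) (hZeig l)
  have iso1 : ∀ k l, h (dphi (star (Z k))) (dphi (star (Z l))) = 0 := by
    intro k l
    rw [hdphistar, hdphistar, hhstar, iso0, star_zero]
  have isoW : ∀ (b : Bool) (k l : Fin m),
      h (dphi (Wb Z b k)) (dphi (Wb Z b l)) = 0 := by
    intro b k l
    cases b
    · exact iso0 k l
    · exact iso1 k l
  have nsym1 : ∀ k l, nab (Z k) (dphi (Z l)) = nab (Z l) (dphi (Z k)) := by
    intro k l
    have h1 := htors (Z k) (Z l)
    rw [hZcomm, map_zero] at h1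
    exact sub_eq_zero.mp h1
  have nstar : ∀ k l, nab (star (Z k)) (dphi (star (Z l)))
      = star (nab (Z k) (dphi (Z l))) := by
    intro k l
    have h1 := hnabstar (Z k) (dphi (Z l))
    rw [← hdphistar] at h1
    exact h1
  have nsym2 : ∀ k l, nab (star (Z k)) (dphi (star (Z l)))
      = nab (star (Z l)) (dphi (star (Z k))) := by
    intro k l
    rw [nstar, nstar, nsym1]
  have nmix1 : ∀ k l, nab (Z k) (dphi (star (Z l))) = 0 := hph
  have nmix2 : ∀ k l, nab (star (Z k)) (dphi (Z l)) = 0 := by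
    intro k l
    have h1 := hnabstar (Z k) (dphi (star (Z l)))
    rw [← hdphistar, star_star] at h1
    rw [hph] at h1
    rw [h1, star_zero]
  have rel0 : ∀ k l p : Fin m, h (nab (Z k) (dphi (Z l))) (dphi (Z p))
      = - h (nab (Z k) (dphi (Z p))) (dphi (Z l)) := by
    intro k l p
    have h1 := hcompat (Z k) (dphi (Z l)) (dphi (Z p))
    rw [iso0, hD0] at h1
    rw [hhsymm (dphi (Z l)) (nab (Z k) (dphi (Z p)))] at h1
    linear_combination -h1
  have A30 : ∀ k l p : Fin m, h (nab (Z k) (dphi (Z l))) (dphi (Z p)) = 0 := by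
    intro k l p
    have e1 : h (nab (Z k) (dphi (Z l))) (dphi (Z p))
        = - h (nab (Z k) (dphi (Z l))) (dphi (Z p)) := by
      conv_lhs => rw [nsym1 k l, rel0 l k p, nsym1 l p, rel0 p l k, nsym1 p k,
        rel0 k p l]
      ring
    exact half _ (by linear_combination e1)
  have A30' : ∀ k l p : Fin m, h (dphi (Z p)) (nab (Z k) (dphi (Z l))) = 0 := by
    intro k l p
    rw [hhsymm]; exact A30 k l p
  have A31 : ∀ k l p : Fin m,
      h (nab (star (Z k)) (dphi (star (Z l)))) (dphi (star (Z p))) = 0 := by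
    intro k l p
    rw [nstar, hdphistar, hhstar, A30, star_zero]
  have A31' : ∀ k l p : Fin m,
      h (dphi (star (Z p))) (nab (star (Z k)) (dphi (star (Z l)))) = 0 := by
    intro k l p
    rw [hhsymm]; exact A31 k l p
  -- Part 1: compatibility of the metric with J
  have claim1 : ∀ x y : V, h (dphi (JM x)) (dphi (JM y)) = h (dphi x) (dphi y) := by
    have base : ∀ (b : Bool) (k : Fin m) (b' : Bool) (l : Fin m),
        h (dphi (JM (Wb Z b k))) (dphi (JM (Wb Z b' l)))
          = h (dphi (Wb Z b k)) (dphi (Wb Z b' l)) := by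
      intro b k b' l
      rw [eigW, eigW, map_smul, map_smul, map_smul, LinearMap.smul_apply,
        map_smul, smul_eq_mul, smul_eq_mul]
      cases b <;> cases b'
      · rw [isoW]; simp
      · show cI F * (-(cI F) * h (dphi (Wb Z false k)) (dphi (Wb Z true l))) = _
        linear_combination (-(h (dphi (Wb Z false k)) (dphi (Wb Z true l)))) * hI2
      · show -(cI F) * (cI F * h (dphi (Wb Z true k)) (dphi (Wb Z false l))) = _
        linear_combination (-(h (dphi (Wb Z true k)) (dphi (Wb Z false l)))) * hI2
      · rw [isoW]; simp
    intro x y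
    refine Submodule.span_induction
      (p := fun v _ => ∀ u : V, h (dphi (JM v)) (dphi (JM u)) = h (dphi v) (dphi u))
      ?_ ?_ ?_ ?_ (mem_top x) y
    · intro v hv u
      obtain ⟨b, k, rfl⟩ := basis_form v hv
      refine Submodule.span_induction
        (p := fun w _ => h (dphi (JM (Wb Z b k))) (dphi (JM w))
          = h (dphi (Wb Z b k)) (dphi w)) ?_ ?_ ?_ ?_ (mem_top u)
      · intro w hw
        obtain ⟨b', l, rfl⟩ := basis_form w hw
        exact base b k b' l
      · simp
      · intro a c _ _ ha hc
        simp only [map_add, LinearMap.add_apply, ha, hc]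
      · intro f a _ ha
        simp only [map_smul, LinearMap.smul_apply, smul_eq_mul, ha]
    · intro u; simp
    · intro a c _ _ ha hc u
      simp only [map_add, LinearMap.add_apply, ha u, hc u]
    · intro f a _ ha u
      simp only [map_smul, LinearMap.smul_apply, smul_eq_mul, ha u]
  -- the Kaehler form and its properties
  have womgadd1 : ∀ a a' b : V, omg h dphi JM (a + a') b
      = omg h dphi JM a b + omg h dphi JM a' b := by
    intro a a' b; simp only [omg_apply, map_add, LinearMap.add_apply]
  have womgadd2 : ∀ a b b' : V, omg h dphi JM a (b + b')
      = omg h dphi JM a b + omg h dphi JM a b' := by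
    intro a b b'; simp only [omg_apply, map_add]
  have womgsm1 : ∀ (f : F) (a b : V), omg h dphi JM (f • a) b
      = f * omg h dphi JM a b := by
    intro f a b
    simp only [omg_apply, map_smul, LinearMap.smul_apply, smul_eq_mul]
  have womgsm2 : ∀ (f : F) (a b : V), omg h dphi JM a (f • b)
      = f * omg h dphi JM a b := by
    intro f a b
    simp only [omg_apply, map_smul, smul_eq_mul]
  have womg0 : ∀ b : V, omg h dphi JM 0 b = 0 := by
    intro b; simp [omg_apply]
  have wanti : ∀ a b : V, omg h dphi JM a b = - omg h dphi JM b a := by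
    intro a b
    have h1 := claim1 a (JM b)
    rw [hJM2] at h1
    simp only [map_neg] at h1
    have h2 := hhsymm (dphi a) (dphi (JM b))
    simp only [omg_apply]
    linear_combination -h1 - h2
  -- bracket auxiliary identities
  have hbradd1' : ∀ x x' y : V, br (x + x') y = br x y + br x' y := by
    intro x x' y
    rw [hbranti, hbradd2, hbranti y x, hbranti y x']
    abel
  have hbrleib' : ∀ (f : F) (x y : V),
      br (f • x) y = (-(D y f)) • x + f • br x y := by
    intro f x y
    rw [hbranti, hbrleib, hbranti y x]
    module
  -- multilinearity of Tf
  have Tsm1 : ∀ (f : F) (x y z : V), Tf h dphi JM D br (f • x) y z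
      = f * Tf h dphi JM D br x y z := by
    intro f x y z
    simp only [Tf_apply, hbrleib, hbrleib', womgadd1, womgadd2, womgsm1, womgsm2,
      hDsm1, hDleib]
    ring
  have Tsm2 : ∀ (f : F) (x y z : V), Tf h dphi JM D br x (f • y) z
      = f * Tf h dphi JM D br x y z := by
    intro f x y z
    simp only [Tf_apply, hbrleib, hbrleib', womgadd1, womgadd2, womgsm1, womgsm2,
      hDsm1, hDleib]
    linear_combination D z f * wanti x y
  have Tsm3 : ∀ (f : F) (x y z : V), Tf h dphi JM D br x y (f • z)
      = f * Tf h dphi JM D br x y z := by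
    intro f x y z
    simp only [Tf_apply, hbrleib, hbrleib', womgadd1, womgadd2, womgsm1, womgsm2,
      hDsm1, hDleib]
    linear_combination D x f * wanti y z - D y f * wanti x z
  have Tadd1 : ∀ x x' y z : V, Tf h dphi JM D br (x + x') y z
      = Tf h dphi JM D br x y z + Tf h dphi JM D br x' y z := by
    intro x x' y z
    simp only [Tf_apply, hDadd1, hbradd1', hbradd2, womgadd1, womgadd2, hDadd2]
    ring
  have Tadd2 : ∀ x y y' z : V, Tf h dphi JM D br x (y + y') z
      = Tf h dphi JM D br x y z + Tf h dphi JM D br x y' z := by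
    intro x y y' z
    simp only [Tf_apply, hDadd1, hbradd1', hbradd2, womgadd1, womgadd2, hDadd2]
    ring
  have Tadd3 : ∀ x y z z' : V, Tf h dphi JM D br x y (z + z')
      = Tf h dphi JM D br x y z + Tf h dphi JM D br x y z' := by
    intro x y z z'
    simp only [Tf_apply, hDadd1, hbradd1', hbradd2, womgadd1, womgadd2, hDadd2]
    ring
  -- value of omega on basis fields
  have omgW : ∀ (b : Bool) (k : Fin m) (b' : Bool) (l : Fin m),
      omg h dphi JM (Wb Z b k) (Wb Z b' l)
        = eB F b * h (dphi (Wb Z b k)) (dphi (Wb Z b' l)) := by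
    intro b k b' l
    rw [omg_apply, eigW, map_smul, map_smul, LinearMap.smul_apply, smul_eq_mul]
  -- Tf vanishes on basis fields
  have Tbasis : ∀ (b1 b2 b3 : Bool) (k1 k2 k3 : Fin m),
      Tf h dphi JM D br (Wb Z b1 k1) (Wb Z b2 k2) (Wb Z b3 k3) = 0 := by
    intro b1 b2 b3 k1 k2 k3
    rw [Tf_apply, brW, brW, brW, womg0, womg0, womg0, omgW, omgW, omgW,
      hDleib, hDleib, hDleib, hDe, hDe, hDe, hcompat, hcompat, hcompat]
    simp only [zero_mul, add_zero, sub_zero]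
    cases b1 <;> cases b2 <;> cases b3 <;>
      simp only [Wb, eB]
    · simp [A30, A30']
    · rw [nmix1 k1 k3, nmix1 k2 k3, nmix2 k3 k1, nmix2 k3 k2, nsym1 k2 k1]
      simp
    · rw [nmix1 k1 k2, nmix2 k2 k1, nmix2 k2 k3, nmix1 k3 k2, nsym1 k3 k1,
        hhsymm (dphi (star (Z k2))) (nab (Z k1) (dphi (Z k3)))]
      simp
    · rw [nmix1 k1 k2, nmix1 k1 k3, nmix2 k2 k1, nmix2 k3 k1, nsym2 k3 k2]
      simp
    · rw [nmix2 k1 k2, nmix2 k1 k3, nmix1 k2 k1, nmix1 k3 k1, nsym1 k3 k2]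
      simp
    · rw [nmix2 k1 k2, nmix1 k2 k1, nmix1 k2 k3, nmix2 k3 k2, nsym2 k3 k1,
        hhsymm (dphi (Z k2)) (nab (star (Z k1)) (dphi (star (Z k3))))]
      simp
    · rw [nmix2 k1 k3, nmix2 k2 k3, nmix1 k3 k1, nmix1 k3 k2, nsym2 k2 k1]
      simp
    · simp [A31, A31']
  -- Tf vanishes identically, by span induction in each slot
  have key2 : ∀ x y z : V, Tf h dphi JM D br x y z = 0 := by
    have step1 : ∀ (b1 : Bool) (k1 : Fin m) (b2 : Bool) (k2 : Fin m) (z : V),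
        Tf h dphi JM D br (Wb Z b1 k1) (Wb Z b2 k2) z = 0 := by
      intro b1 k1 b2 k2 z
      refine Submodule.span_induction
        (p := fun v _ => Tf h dphi JM D br (Wb Z b1 k1) (Wb Z b2 k2) v = 0)
        ?_ ?_ ?_ ?_ (mem_top z)
      · intro v hv
        obtain ⟨b3, k3, rfl⟩ := basis_form v hv
        exact Tbasis b1 b2 b3 k1 k2 k3
      · show Tf h dphi JM D br (Wb Z b1 k1) (Wb Z b2 k2) 0 = 0
        have h1 := Tsm3 0 (Wb Z b1 k1) (Wb Z b2 k2) 0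
        rw [zero_smul] at h1
        rw [h1, zero_mul]
      · intro u v _ _ hu hv
        show Tf h dphi JM D br (Wb Z b1 k1) (Wb Z b2 k2) (u + v) = 0
        rw [Tadd3, hu, hv, add_zero]
      · intro f u _ hu
        show Tf h dphi JM D br (Wb Z b1 k1) (Wb Z b2 k2) (f • u) = 0
        rw [Tsm3, hu, mul_zero]
    have step2 : ∀ (b1 : Bool) (k1 : Fin m) (y z : V),
        Tf h dphi JM D br (Wb Z b1 k1) y z = 0 := by
      intro b1 k1 y z
      refine Submodule.span_induction
        (p := fun v _ => ∀ z : V, Tf h dphi JM D br (Wb Z b1 k1) v z = 0)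
        ?_ ?_ ?_ ?_ (mem_top y) z
      · intro v hv
        obtain ⟨b2, k2, rfl⟩ := basis_form v hv
        exact step1 b1 k1 b2 k2
      · intro z
        show Tf h dphi JM D br (Wb Z b1 k1) 0 z = 0
        have h1 := Tsm2 0 (Wb Z b1 k1) 0 z
        rw [zero_smul] at h1
        rw [h1, zero_mul]
      · intro u v _ _ hu hv z
        show Tf h dphi JM D br (Wb Z b1 k1) (u + v) z = 0
        rw [Tadd2, hu z, hv z, add_zero]
      · intro f u _ hu z
        show Tf h dphi JM D br (Wb Z b1 k1) (f • u) z = 0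
        rw [Tsm2, hu z, mul_zero]
    intro x y z
    refine Submodule.span_induction
      (p := fun v _ => ∀ y z : V, Tf h dphi JM D br v y z = 0)
      ?_ ?_ ?_ ?_ (mem_top x) y z
    · intro v hv
      obtain ⟨b1, k1, rfl⟩ := basis_form v hv
      exact step2 b1 k1
    · intro y z
      show Tf h dphi JM D br 0 y z = 0
      have h1 := Tsm1 0 0 y z
      rw [zero_smul] at h1
      rw [h1, zero_mul]
    · intro u v _ _ hu hv y z
      show Tf h dphi JM D br (u + v) y z = 0
      rw [Tadd1, hu y z, hv y z, add_zero]
    · intro f u _ hu y z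
      show Tf h dphi JM D br (f • u) y z = 0
      rw [Tsm1, hu y z, mul_zero]
  refine ⟨claim1, ?_⟩
  intro x y z
  have hk := key2 x y z
  simp only [Tf_apply, omg_apply] at hk
  exact hk
end

section
/- Let φ : M → N be a smooth map from a Hermitian manifold (M, g, J) to a Riemannian manifold N. Then φ is (1,1)-geodesic if and only if for every x ∈ M there exists an almost Hermitian structure J_x on T_{φ(x)}N such that (∇dφ)_x(Y^{10}, Z^{01}) ∈ T^{10}_{J_x}N for all Y^{10} ∈ T^{10}_x M, Z^{01} ∈ T^{01}_x M. -/
/-!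
Complex conjugation `σ` on a complexification commutes with complexified real maps, so it
exchanges `T¹⁰` and `T⁰¹`; it also commutes with the complex-bilinear extension `βc` of the real
form `β`, which is symmetric since `β` is. Hence if `w = βc(Y¹⁰, Z⁰¹)` always lies in `T¹⁰_{J'}`,
then so does `σ w = βc(σ Z⁰¹, σ Y¹⁰)`, i.e. `w ∈ T¹⁰_{J'} ∩ T⁰¹_{J'} = 0`. Conversely, an even
dimensional Euclidean space carries an orthogonal complex structure, transported from `ℂⁿ`.
-/

open TensorProduct
open Module.End
open scoped RealInnerProductSpace ComplexConjugate

theorem exists_isometric_complexStructure_of_finrank_eq_two_mul (E : Type*) [NormedAddCommGroup E]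
    [InnerProductSpace ℝ E] [FiniteDimensional ℝ E] {n : ℕ} (hn : Module.finrank ℝ E = 2 * n) :
    ∃ J : E →ₗ[ℝ] E, (∀ u, J (J u) = -u) ∧ ∀ u v : E, ⟪J u, J v⟫ = ⟪u, v⟫ := by
  have hdim : Module.finrank ℝ E = Module.finrank ℝ (EuclideanSpace ℂ (Fin n)) := by
    rw [hn, finrank_real_of_complex, finrank_euclideanSpace_fin]
  let e : E ≃ₗᵢ[ℝ] EuclideanSpace ℂ (Fin n) :=
    (stdOrthonormalBasis ℝ E).equiv (stdOrthonormalBasis ℝ _) (finCongr hdim)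
  refine ⟨e.symm.toLinearMap ∘ₗ (Complex.I • LinearMap.id) ∘ₗ e.toLinearMap,
    fun u => ?_, fun u v => ?_⟩
  · simp [smul_smul]
  · have hI (x y : EuclideanSpace ℂ (Fin n)) : ⟪Complex.I • x, Complex.I • y⟫ = ⟪x, y⟫ := by
      simp [PiLp.inner_apply, Complex.inner]
    simp [hI]

namespace TensorProduct

variable {V W : Type*} [AddCommGroup V] [Module ℝ V] [AddCommGroup W] [Module ℝ W]

variable (V) in
noncomputable def complexConj : ℂ ⊗[ℝ] V →ₗ[ℝ] ℂ ⊗[ℝ] V :=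
  Complex.conjAe.toLinearMap.rTensor V

@[simp]
theorem complexConj_tmul (z : ℂ) (v : V) : complexConj V (z ⊗ₜ v) = conj z ⊗ₜ v := rfl

@[simp]
theorem complexConj_complexConj (x : ℂ ⊗[ℝ] V) : complexConj V (complexConj V x) = x := by
  induction x using TensorProduct.induction_on with
  | zero => simp
  | tmul z v => simp
  | add x y hx hy => simp [hx, hy]

theorem complexConj_smul (c : ℂ) (x : ℂ ⊗[ℝ] V) :
    complexConj V (c • x) = conj c • complexConj V x := by
  induction x using TensorProduct.induction_on with
  | zero => simp
  | tmul z v => simp [smul_tmul']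
  | add x y hx hy => simp [hx, hy]

theorem complexConj_baseChange (f : V →ₗ[ℝ] W) (x : ℂ ⊗[ℝ] V) :
    complexConj W (f.baseChange ℂ x) = f.baseChange ℂ (complexConj V x) := by
  induction x using TensorProduct.induction_on with
  | zero => simp
  | tmul z v => simp
  | add x y hx hy => simp only [map_add, hx, hy]

theorem complexConj_mem_eigenspace_baseChange {f : V →ₗ[ℝ] V} {μ : ℂ} {x : ℂ ⊗[ℝ] V}
    (hx : x ∈ eigenspace (f.baseChange ℂ) μ) :
    complexConj V x ∈ eigenspace (f.baseChange ℂ) (conj μ) := by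
  rw [mem_eigenspace_iff] at hx ⊢
  rw [← complexConj_baseChange, hx, complexConj_smul]

theorem eq_zero_of_mem_eigenspace_I_of_complexConj_mem {f : V →ₗ[ℝ] V} {x : ℂ ⊗[ℝ] V}
    (hx : x ∈ eigenspace (f.baseChange ℂ) Complex.I)
    (hx' : complexConj V x ∈ eigenspace (f.baseChange ℂ) Complex.I) : x = 0 := by
  have h := complexConj_mem_eigenspace_baseChange hx'
  rw [complexConj_complexConj, Complex.conj_I] at h
  exact Submodule.disjoint_def.mp
    (disjoint_genEigenspace _ (by norm_num [Complex.ext_iff]) 1 1) x hx h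

section Bilinear

variable {B : ℂ ⊗[ℝ] V →ₗ[ℂ] ℂ ⊗[ℝ] V →ₗ[ℂ] ℂ ⊗[ℝ] W} {b : V →ₗ[ℝ] V →ₗ[ℝ] W}

theorem apply_tmul_tmul_of_apply_one_tmul (hB : ∀ u v, B (1 ⊗ₜ u) (1 ⊗ₜ v) = 1 ⊗ₜ b u v)
    (z w : ℂ) (u v : V) : B (z ⊗ₜ u) (w ⊗ₜ v) = (z * w) ⊗ₜ b u v := by
  simp only [tmul_eq_smul_one_tmul z, tmul_eq_smul_one_tmul w, map_smul, LinearMap.smul_apply, hB,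
    smul_smul, mul_comm w]
  exact (tmul_eq_smul_one_tmul _ _).symm

theorem apply_comm_of_apply_one_tmul (hB : ∀ u v, B (1 ⊗ₜ u) (1 ⊗ₜ v) = 1 ⊗ₜ b u v)
    (hb : ∀ u v, b u v = b v u) (Y Z : ℂ ⊗[ℝ] V) : B Y Z = B Z Y := by
  induction Y using TensorProduct.induction_on with
  | zero => simp
  | add Y Y' hY hY' => simp [hY, hY']
  | tmul z u =>
    induction Z using TensorProduct.induction_on with
    | zero => simp
    | add Z Z' hZ hZ' => simp [hZ, hZ']
    | tmul w v =>
      rw [apply_tmul_tmul_of_apply_one_tmul hB, apply_tmul_tmul_of_apply_one_tmul hB, mul_comm, hb]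

theorem complexConj_apply_apply_of_apply_one_tmul (hB : ∀ u v, B (1 ⊗ₜ u) (1 ⊗ₜ v) = 1 ⊗ₜ b u v)
    (Y Z : ℂ ⊗[ℝ] V) : complexConj W (B Y Z) = B (complexConj V Y) (complexConj V Z) := by
  induction Y using TensorProduct.induction_on with
  | zero => simp
  | add Y Y' hY hY' => simp [hY, hY']
  | tmul z u =>
    induction Z using TensorProduct.induction_on with
    | zero => simp
    | add Z Z' hZ hZ' => simp [hZ, hZ']
    | tmul w v => simp [apply_tmul_tmul_of_apply_one_tmul hB]

theorem apply_eq_zero_of_forall_apply_mem_eigenspace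
    (hB : ∀ u v, B (1 ⊗ₜ u) (1 ⊗ₜ v) = 1 ⊗ₜ b u v) (hb : ∀ u v, b u v = b v u)
    {f : V →ₗ[ℝ] V} {g : W →ₗ[ℝ] W}
    (h : ∀ Y Z, Y ∈ eigenspace (f.baseChange ℂ) Complex.I →
      Z ∈ eigenspace (f.baseChange ℂ) (-Complex.I) → B Y Z ∈ eigenspace (g.baseChange ℂ) Complex.I)
    {Y Z : ℂ ⊗[ℝ] V} (hY : Y ∈ eigenspace (f.baseChange ℂ) Complex.I)
    (hZ : Z ∈ eigenspace (f.baseChange ℂ) (-Complex.I)) : B Y Z = 0 := by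
  refine eq_zero_of_mem_eigenspace_I_of_complexConj_mem (h Y Z hY hZ) ?_
  have hY' := complexConj_mem_eigenspace_baseChange hY
  have hZ' := complexConj_mem_eigenspace_baseChange hZ
  rw [Complex.conj_I] at hY'
  rw [map_neg, Complex.conj_I, neg_neg] at hZ'
  rw [complexConj_apply_apply_of_apply_one_tmul hB, apply_comm_of_apply_one_tmul hB hb]
  exact h _ _ hZ' hY'

end Bilinear

end TensorProduct

theorem one_one_geodesic_iff_exists_hermitian_structure_general
    (E E' : Type*) [NormedAddCommGroup E] [InnerProductSpace ℝ E]
    [NormedAddCommGroup E'] [InnerProductSpace ℝ E'] [FiniteDimensional ℝ E']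
    (J : E →ₗ[ℝ] E)
    (n : ℕ) (hn : Module.finrank ℝ E' = 2 * n)
    (β : E →ₗ[ℝ] E →ₗ[ℝ] E') (hβsymm : ∀ u v, β u v = β v u)
    (βc : (ℂ ⊗[ℝ] E) →ₗ[ℂ] (ℂ ⊗[ℝ] E) →ₗ[ℂ] (ℂ ⊗[ℝ] E'))
    (hβc : ∀ u v : E, βc ((1 : ℂ) ⊗ₜ[ℝ] u) ((1 : ℂ) ⊗ₜ[ℝ] v) = (1 : ℂ) ⊗ₜ[ℝ] (β u v)) :
    (∀ Y Z : ℂ ⊗[ℝ] E, (J.baseChange ℂ) Y = Complex.I • Y →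
        (J.baseChange ℂ) Z = -Complex.I • Z → βc Y Z = 0) ↔
      (∃ J' : E' →ₗ[ℝ] E', (∀ u, J' (J' u) = -u) ∧
        (∀ u v : E', ⟪J' u, J' v⟫ = ⟪u, v⟫) ∧
        (∀ Y Z : ℂ ⊗[ℝ] E, (J.baseChange ℂ) Y = Complex.I • Y →
          (J.baseChange ℂ) Z = -Complex.I • Z →
          (J'.baseChange ℂ) (βc Y Z) = Complex.I • βc Y Z)) := by
  simp only [← mem_eigenspace_iff]
  constructor
  · intro h
    obtain ⟨J', hJ'2, hJ'm⟩ := exists_isometric_complexStructure_of_finrank_eq_two_mul E' hn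
    exact ⟨J', hJ'2, hJ'm, fun Y Z hY hZ => by simp [h Y Z hY hZ]⟩
  · rintro ⟨J', -, -, hJ'⟩ Y Z hY hZ
    exact apply_eq_zero_of_forall_apply_mem_eigenspace hβc hβsymm hJ' hY hZ

/-- Pointwise characterisation of `(1,1)`-geodesic maps.  Let `φ : M → N` be a smooth
map from a Hermitian manifold to a (even-dimensional) Riemannian manifold; at a point
`x ∈ M`, let `E = T_x M` with its Hermitian structure `J`, `E' = T_{φ(x)} N` with its
inner product, and let `β = (∇dφ)_x` be the (symmetric) second fundamental form,
with complex-bilinear extension `βc`.  Then `β` vanishes on `T¹⁰ × T⁰¹` (the map is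
`(1,1)`-geodesic at `x`) if and only if there exists an almost Hermitian structure `J'`
on `E'` such that `βc(Y¹⁰, Z⁰¹) ∈ T¹⁰_{J'} E'` for all `Y¹⁰ ∈ T¹⁰E`, `Z⁰¹ ∈ T⁰¹E`. -/
theorem one_one_geodesic_iff_exists_hermitian_structure
    (E E' : Type*) [NormedAddCommGroup E] [InnerProductSpace ℝ E]
    [NormedAddCommGroup E'] [InnerProductSpace ℝ E'] [FiniteDimensional ℝ E']
    (J : E →ₗ[ℝ] E) (hJ2 : ∀ u, J (J u) = -u)
    (hJm : ∀ u v : E, ⟪J u, J v⟫ = ⟪u, v⟫)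
    (n : ℕ) (hn : Module.finrank ℝ E' = 2 * n)
    (β : E →ₗ[ℝ] E →ₗ[ℝ] E') (hβsymm : ∀ u v, β u v = β v u)
    (βc : (ℂ ⊗[ℝ] E) →ₗ[ℂ] (ℂ ⊗[ℝ] E) →ₗ[ℂ] (ℂ ⊗[ℝ] E'))
    (hβc : ∀ u v : E, βc ((1 : ℂ) ⊗ₜ[ℝ] u) ((1 : ℂ) ⊗ₜ[ℝ] v) = (1 : ℂ) ⊗ₜ[ℝ] (β u v)) :
    (∀ Y Z : ℂ ⊗[ℝ] E, (J.baseChange ℂ) Y = Complex.I • Y →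
        (J.baseChange ℂ) Z = -Complex.I • Z → βc Y Z = 0) ↔
      (∃ J' : E' →ₗ[ℝ] E', (∀ u, J' (J' u) = -u) ∧
        (∀ u v : E', ⟪J' u, J' v⟫ = ⟪u, v⟫) ∧
        (∀ Y Z : ℂ ⊗[ℝ] E, (J.baseChange ℂ) Y = Complex.I • Y →
          (J.baseChange ℂ) Z = -Complex.I • Z →
          (J'.baseChange ℂ) (βc Y Z) = Complex.I • βc Y Z)) :=
  one_one_geodesic_iff_exists_hermitian_structure_general E E' J n hn β hβsymm βc hβc
end

section
/- Every pluriconformal totally umbilic map φ : M → N from a Hermitian manifold to a Riemannian manifold is real isotropic: the condition ∇dφ(T^{10}M, T^{10}M) ⊆ dφ(T^{10}M), together with isotropy of dφ(T^{10}M), implies ⟨∇^{r−1}_{T^{10}M} dφ(T^{10}M), ∇^{s−1}_{T^{10}M} dφ(T^{10}M)⟩ = 0 for all r, s ≥ 1. -/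
/-- The iterated covariant derivatives `∇^{r}_{T¹⁰M} dφ(T¹⁰M)`. -/
noncomputable def iterDerivSet {F V S : Type*} [CommRing F] [Algebra ℂ F]
    [AddCommGroup V] [Module F V] [AddCommGroup S] [Module F S]
    (JM : V →ₗ[F] V) (dphi : V →ₗ[F] S) (nab : V → S → S) : ℕ → Set S
  | 0 => {s | ∃ v : V, JM v = cI F • v ∧ s = dphi v}
  | (r + 1) => {s | ∃ v : V, ∃ t ∈ iterDerivSet JM dphi nab r,
      JM v = cI F • v ∧ s = nab v t}

/-- The submodule of sections generated by `dφ(T¹⁰M)`. -/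
noncomputable def dphiTenZeroSpan {F V S : Type*} [CommRing F] [Algebra ℂ F]
    [AddCommGroup V] [Module F V] [AddCommGroup S] [Module F S]
    (JM : V →ₗ[F] V) (dphi : V →ₗ[F] S) : Submodule F S :=
  Submodule.span F {s | ∃ v : V, JM v = cI F • v ∧ s = dphi v}

open Submodule

theorem map_mem_span_of_leibniz {R M : Type*} [Semiring R] [AddCommGroup M] [Module R M]
    {s : Set M} (f : M → M) (d : R → R) (hadd : ∀ x y, f (x + y) = f x + f y)
    (hleib : ∀ (c : R) x, f (c • x) = d c • x + c • f x) (hs : ∀ x ∈ s, f x ∈ span R s)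
    {x : M} (hx : x ∈ span R s) : f x ∈ span R s := by
  have hzero : f 0 = 0 := by simpa using hadd 0 0
  induction hx using Submodule.span_induction with
  | mem x hx => exact hs x hx
  | zero => rw [hzero]; exact zero_mem _
  | add x y _ _ hfx hfy => exact hadd x y ▸ add_mem hfx hfy
  | smul c x hx hfx => exact hleib c x ▸ add_mem (smul_mem _ _ hx) (smul_mem _ _ hfx)

theorem LinearMap.apply_apply_eq_zero_of_mem_span {R M N P : Type*} [CommSemiring R]
    [AddCommMonoid M] [AddCommMonoid N] [AddCommMonoid P] [Module R M] [Module R N] [Module R P]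
    (B : M →ₗ[R] N →ₗ[R] P) {s : Set M} {t : Set N} (h : ∀ x ∈ s, ∀ y ∈ t, B x y = 0)
    {x : M} {y : N} (hx : x ∈ span R s) (hy : y ∈ span R t) : B x y = 0 := by
  have hs : ∀ x ∈ s, y ∈ LinearMap.ker (B x) := fun x hxs =>
    span_le.mpr (fun y hyt => h x hxs y hyt) hy
  exact span_le (p := LinearMap.ker (B.flip y)).mpr hs hx

section

variable {F V S : Type*} [CommRing F] [Algebra ℂ F] [AddCommGroup V] [Module F V]
  [AddCommGroup S] [Module F S] {JM : V →ₗ[F] V} {dphi : V →ₗ[F] S}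

theorem iterDerivSet_subset_dphiTenZeroSpan {nabM : V → V → V}
    (hMherm : ∀ v w : V, JM v = cI F • v → JM w = cI F • w →
      JM (nabM v w) = cI F • nabM v w)
    {nab : V → S → S} (D : V → F → F)
    (hadd : ∀ (v : V) (s t : S), nab v (s + t) = nab v s + nab v t)
    (hleib : ∀ (v : V) (f : F) (s : S), nab v (f • s) = D v f • s + f • nab v s)
    (humb : ∀ v w : V, JM v = cI F • v → JM w = cI F • w →
      nab v (dphi w) - dphi (nabM v w) ∈ dphiTenZeroSpan JM dphi) :
    ∀ r, iterDerivSet JM dphi nab r ⊆ dphiTenZeroSpan JM dphi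
  | 0 => subset_span
  | r + 1 => by
    rintro _ ⟨v, t, ht, hv, rfl⟩
    refine map_mem_span_of_leibniz (nab v) (D v) (hadd v) (hleib v) ?_
      (iterDerivSet_subset_dphiTenZeroSpan hMherm D hadd hleib humb r ht)
    rintro _ ⟨w, hw, rfl⟩
    have hM : dphi (nabM v w) ∈ dphiTenZeroSpan JM dphi :=
      subset_span ⟨_, hMherm v w hv hw, rfl⟩
    exact sub_add_cancel (nab v (dphi w)) _ ▸ add_mem (humb v w hv hw) hM

end

theorem pluriconformal_totally_umbilic_implies_real_isotropic_general
    (F V S : Type*) [CommRing F] [Algebra ℂ F]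
    [AddCommGroup V] [Module F V] [AddCommGroup S] [Module F S]
    (JM : V →ₗ[F] V)
    (nabM : V → V → V)
    (hMherm : ∀ v w : V, JM v = cI F • v → JM w = cI F • w →
      JM (nabM v w) = cI F • nabM v w)
    (dphi : V →ₗ[F] S)
    (D : V → F → F) (nab : V → S → S)
    (hadd2 : ∀ (v : V) (s t : S), nab v (s + t) = nab v s + nab v t)
    (hleib : ∀ (v : V) (f : F) (s : S), nab v (f • s) = D v f • s + f • nab v s)
    (g : S →ₗ[F] S →ₗ[F] F)
    (hpc : ∀ v w : V, JM v = cI F • v → JM w = cI F • w → g (dphi v) (dphi w) = 0)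
    (humb : ∀ v w : V, JM v = cI F • v → JM w = cI F • w →
      nab v (dphi w) - dphi (nabM v w) ∈ dphiTenZeroSpan JM dphi) :
    ∀ (r s : ℕ) (x y : S), x ∈ iterDerivSet JM dphi nab r →
      y ∈ iterDerivSet JM dphi nab s → g x y = 0 := by
  intro r s x y hx hy
  have hspan := iterDerivSet_subset_dphiTenZeroSpan hMherm D hadd2 hleib humb
  refine g.apply_apply_eq_zero_of_mem_span ?_ (hspan r hx) (hspan s hy)
  rintro _ ⟨v, hv, rfl⟩ _ ⟨w, hw, rfl⟩
  exact hpc v w hv hw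

/-- Every pluriconformal totally umbilic map `φ : M → N` from a Hermitian manifold to a
Riemannian manifold is real isotropic: the condition
`∇dφ(T¹⁰M, T¹⁰M) ⊆ dφ(T¹⁰M)` (total umbilicity, hypothesis `humb`, where
`∇dφ(v,w) = ∇_v(dφ w) - dφ(∇^M_v w)`), together with isotropy of `dφ(T¹⁰M)`
(pluriconformality, hypothesis `hpc`), implies
`⟨∇^{r-1}_{T¹⁰M} dφ(T¹⁰M), ∇^{s-1}_{T¹⁰M} dφ(T¹⁰M)⟩ = 0` for all `r, s ≥ 1`.
Hermitian-ness of `M` enters through `∇^M_{T¹⁰M} T¹⁰M ⊆ T¹⁰M` (hypothesis `hMherm`). -/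
theorem pluriconformal_totally_umbilic_implies_real_isotropic
    (F V S : Type*) [CommRing F] [Algebra ℂ F]
    [AddCommGroup V] [Module F V] [AddCommGroup S] [Module F S]
    (JM : V →ₗ[F] V) (hJM2 : ∀ v, JM (JM v) = -v)
    (nabM : V → V → V)
    (hMherm : ∀ v w : V, JM v = cI F • v → JM w = cI F • w →
      JM (nabM v w) = cI F • nabM v w)
    (dphi : V →ₗ[F] S)
    (D : V → F → F) (nab : V → S → S)
    (hadd2 : ∀ (v : V) (s t : S), nab v (s + t) = nab v s + nab v t)
    (hleib : ∀ (v : V) (f : F) (s : S), nab v (f • s) = D v f • s + f • nab v s)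
    (g : S →ₗ[F] S →ₗ[F] F)
    (hpc : ∀ v w : V, JM v = cI F • v → JM w = cI F • w → g (dphi v) (dphi w) = 0)
    (humb : ∀ v w : V, JM v = cI F • v → JM w = cI F • w →
      nab v (dphi w) - dphi (nabM v w) ∈ dphiTenZeroSpan JM dphi) :
    ∀ (r s : ℕ) (x y : S), x ∈ iterDerivSet JM dphi nab r →
      y ∈ iterDerivSet JM dphi nab s → g x y = 0 :=
  pluriconformal_totally_umbilic_implies_real_isotropic_general F V S JM nabM hMherm dphi D nab
    hadd2 hleib g hpc humb
end
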